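/- Let Q be an inverse quantal frame and X a principal Q-sheaf. For all local bisections s, s', t ∈ 𝔅_X with 1_Q·s = 1_Q·s' = 1_Q·t, one has ⟨s ∧ s', t⟩ = ⟨s,t⟩ ∧ ⟨s',t⟩. -/

import Mathlib

/-- A unital involutive quantale: a complete lattice with an associative
multiplication preserving arbitrary joins in each variable, a unit `e`, and a
join-preserving involution. -/
structure Quantale' (Q : Type*) [CompleteLattice Q] where
  mul : Q → Q → Q
  e : Q
  star : Q → Q
  mul_assoc : ∀ a b c, mul (mul a b) c = mul a (mul b c)
  sSup_mul : ∀ (S : Set Q) (b : Q), mul (sSup S) b = ⨆ a ∈ S, mul a b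
  mul_sSup : ∀ (a : Q) (S : Set Q), mul a (sSup S) = ⨆ b ∈ S, mul a b
  e_mul : ∀ a, mul e a = a
  mul_e : ∀ a, mul a e = a
  star_star : ∀ a, star (star a) = a
  star_mul : ∀ a b, star (mul a b) = mul (star b) (star a)
  star_sSup : ∀ S : Set Q, star (sSup S) = ⨆ a ∈ S, star a

/-- The set of partial units of a quantale. -/
def Quantale'.PU {Q : Type*} [CompleteLattice Q] (Qs : Quantale' Q) : Set Q :=
  {s | Qs.mul s (Qs.star s) ≤ Qs.e ∧ Qs.mul (Qs.star s) s ≤ Qs.e}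

/-- An inverse quantal frame: a unital involutive quantale which is a frame,
has a stable support, and whose partial units join to the top. -/
structure InverseQuantalFrame (Q : Type*) [Order.Frame Q] extends Quantale' Q where
  supp : Q → Q
  supp_le_e : ∀ a, supp a ≤ e
  supp_sSup : ∀ S : Set Q, supp (sSup S) = ⨆ a ∈ S, supp a
  supp_le_mul_star : ∀ a, supp a ≤ mul a (star a)
  le_supp_mul : ∀ a, a ≤ mul (supp a) a
  supp_stable : ∀ b a, b ≤ e → supp (mul b a) = mul b (supp a)
  sSup_PU : sSup {s | mul s (star s) ≤ e ∧ mul (star s) s ≤ e} = ⊤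

/-- A left module over a quantale: a complete lattice with a unital associative
action preserving arbitrary joins in each variable. -/
structure QuantaleModule {Q : Type*} [CompleteLattice Q] (Qs : Quantale' Q)
    (X : Type*) [CompleteLattice X] where
  act : Q → X → X
  act_mul : ∀ a b x, act (Qs.mul a b) x = act a (act b x)
  act_e : ∀ x, act Qs.e x = x
  sSup_act : ∀ (S : Set Q) (x : X), act (sSup S) x = ⨆ a ∈ S, act a x
  act_sSup : ∀ (a : Q) (S : Set X), act a (sSup S) = ⨆ x ∈ S, act a x

/-- A pre-Hilbert module over a quantale. -/
structure PreHilbertModule {Q : Type*} [CompleteLattice Q] (Qs : Quantale' Q)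
    (X : Type*) [CompleteLattice X] extends QuantaleModule Qs X where
  inner : X → X → Q
  inner_act : ∀ a x y, inner (act a x) y = Qs.mul a (inner x y)
  sSup_inner : ∀ (S : Set X) (y : X), inner (sSup S) y = ⨆ x ∈ S, inner x y
  inner_star : ∀ x y, inner x y = Qs.star (inner y x)

namespace PreHilbertModule

variable {Q X : Type*} [CompleteLattice Q] [CompleteLattice X] {Qs : Quantale' Q}

/-- A Hilbert section: `⟨x,s⟩s ≤ x` for all `x`. -/
def IsHilbertSection (H : PreHilbertModule Qs X) (s : X) : Prop :=
  ∀ x, H.act (H.inner x s) s ≤ x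

/-- A regular element: `⟨s,s⟩s = s`. -/
def IsRegularSection (H : PreHilbertModule Qs X) (s : X) : Prop :=
  H.act (H.inner s s) s = s

/-- A Hilbert basis: `x = ⋁_{t ∈ S} ⟨x,t⟩t` for all `x`. -/
def IsHilbertBasis (H : PreHilbertModule Qs X) (S : Set X) : Prop :=
  ∀ x, x = ⨆ t ∈ S, H.act (H.inner x t) t

/-- Non-degeneracy of the inner product. -/
def Nondegenerate (H : PreHilbertModule Qs X) : Prop :=
  ∀ x y, (∀ z, H.inner x z = H.inner y z) → x = y

end PreHilbertModule

/-- A `Q`-locale over an inverse quantal frame: a module which is a frame and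
satisfies the anchor condition. -/
structure QLocale {Q : Type*} [Order.Frame Q] (Qf : InverseQuantalFrame Q)
    (X : Type*) [Order.Frame X] extends QuantaleModule Qf.toQuantale' X where
  anchor : ∀ b x, b ≤ Qf.e → act b x = act b ⊤ ⊓ x

/-- A `Q`-sheaf over an inverse quantal frame: a pre-Hilbert module which is a
frame, satisfies the anchor condition, and has a Hilbert basis. -/
structure QSheaf {Q : Type*} [Order.Frame Q] (Qf : InverseQuantalFrame Q)
    (X : Type*) [Order.Frame X] extends PreHilbertModule Qf.toQuantale' X where
  anchor : ∀ b x, b ≤ Qf.e → act b x = act b ⊤ ⊓ x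
  hasBasis : ∃ S : Set X, ∀ x, x = ⨆ t ∈ S, act (inner x t) t

namespace QSheaf

variable {Q X : Type*} [Order.Frame Q] [Order.Frame X] {Qf : InverseQuantalFrame Q}

/-- The support `ς_X(x) = ⟨x,x⟩ ∧ e` of a `Q`-sheaf. -/
def sppX (H : QSheaf Qf X) (x : X) : Q := H.inner x x ⊓ Qf.e

/-- A local section: `ς_X(x)s = x` for all `x ≤ s`. -/
def IsLocalSection (H : QSheaf Qf X) (s : X) : Prop :=
  ∀ x ≤ s, H.act (H.sppX x) s = x

/-- A principal section: a local section with `⟨s,s⟩ ≤ e`. -/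
def IsPrincipalSection (H : QSheaf Qf X) (s : X) : Prop :=
  H.IsLocalSection s ∧ H.inner s s ≤ Qf.e

/-- A right local section: `x = s ∧ 1_Q·x` for all `x ≤ s`. -/
def IsRightLocalSection (H : QSheaf Qf X) (s : X) : Prop :=
  ∀ x ≤ s, x = s ⊓ H.act ⊤ x

/-- A local bisection: simultaneously a local section and a right local section. -/
def IsBisection (H : QSheaf Qf X) (s : X) : Prop :=
  H.IsLocalSection s ∧ H.IsRightLocalSection s

end QSheaf


/-
Take `b = ⟨s,t⟩ ∧ ⟨s',t⟩`. Since `t` is a Hilbert section, `bt ≤ ⟨s,t⟩t ≤ s` and likewise `bt ≤ s'`;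
since `s` is one too, `b*b ≤ ⟨t,s⟩⟨s,t⟩ = ⟨⟨t,s⟩s, t⟩ ≤ ⟨t,t⟩`, hence
`b ≤ bb*b ≤ b⟨t,t⟩ = ⟨bt,t⟩ ≤ ⟨s ∧ s', t⟩`.

That local sections are Hilbert sections (`⟨x,t⟩t ≤ x`) is the substance. Using a Hilbert basis and
`⋁ Q_I = 1`, `t` is a join of elements `p = wu` with `u` a Hilbert section and `w` a partial unit
with `w*w ≤ ⟨u,u⟩`, so that `ww* ≤ ς(p)`. For two such pieces `p, p' ≤ t`, the anchor condition
and `p = ς(p)t` give `ς(p)p' ≤ p`, hence `w*p' = w*ww*p' ≤ w*p ≤ u` and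
`⟨x,p⟩p' = ⟨x,u⟩w*p' ≤ ⟨x,u⟩u ≤ x`.
-/

section JoinPreserving

variable {α β : Type*} [CompleteLattice α] [CompleteLattice β] {f : α → β}

theorem monotone_of_map_sSup (hf : ∀ S : Set α, f (sSup S) = ⨆ a ∈ S, f a) : Monotone f :=
  OrderHomClass.mono (⟨f, fun S => by rw [hf, sSup_image]⟩ : sSupHom α β)

theorem map_iSup₂_of_map_sSup (hf : ∀ S : Set α, f (sSup S) = ⨆ a ∈ S, f a)
    {ι : Sort*} {κ : ι → Sort*} (g : ∀ i, κ i → α) : f (⨆ (i) (j), g i j) = ⨆ (i) (j), f (g i j) :=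
  map_iSup₂ (⟨f, fun S => by rw [hf, sSup_image]⟩ : sSupHom α β) g

end JoinPreserving

namespace Quantale'

variable {Q : Type*} [CompleteLattice Q] (Qs : Quantale' Q) {a b c d w : Q}

theorem mul_le_mul (hab : a ≤ b) (hcd : c ≤ d) : Qs.mul a c ≤ Qs.mul b d :=
  (monotone_of_map_sSup (f := (Qs.mul · c)) (fun S => Qs.sSup_mul S c) hab).trans
    (monotone_of_map_sSup (f := Qs.mul b) (Qs.mul_sSup b) hcd)

theorem star_mono : Monotone Qs.star :=
  monotone_of_map_sSup Qs.star_sSup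

theorem star_e : Qs.star Qs.e = Qs.e :=
  calc Qs.star Qs.e = Qs.mul (Qs.star (Qs.star Qs.e)) (Qs.star Qs.e) := by
        rw [Qs.star_star, Qs.e_mul]
    _ = Qs.star (Qs.mul Qs.e (Qs.star Qs.e)) := (Qs.star_mul _ _).symm
    _ = Qs.e := by rw [Qs.e_mul, Qs.star_star]

theorem star_le_e (hb : b ≤ Qs.e) : Qs.star b ≤ Qs.e :=
  Qs.star_e ▸ Qs.star_mono hb

theorem mem_PU_of_le (hw : w ∈ Qs.PU) (h : a ≤ w) : a ∈ Qs.PU :=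
  ⟨(Qs.mul_le_mul h (Qs.star_mono h)).trans hw.1, (Qs.mul_le_mul (Qs.star_mono h) h).trans hw.2⟩

theorem mem_PU_of_le_e (hb : b ≤ Qs.e) : b ∈ Qs.PU := by
  have hb' := Qs.star_le_e hb
  exact ⟨(Qs.mul_le_mul hb hb').trans (Qs.mul_e _).le,
    (Qs.mul_le_mul hb' hb).trans (Qs.mul_e _).le⟩

theorem star_mem_PU (hw : w ∈ Qs.PU) : Qs.star w ∈ Qs.PU := by
  rw [PU, Set.mem_ofPred_eq, Qs.star_star]
  exact hw.symm

theorem mul_mem_PU (ha : a ∈ Qs.PU) (hb : b ∈ Qs.PU) : Qs.mul a b ∈ Qs.PU := by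
  constructor
  · calc Qs.mul (Qs.mul a b) (Qs.star (Qs.mul a b))
        = Qs.mul a (Qs.mul (Qs.mul b (Qs.star b)) (Qs.star a)) := by
          rw [Qs.star_mul, Qs.mul_assoc, Qs.mul_assoc]
      _ ≤ Qs.mul a (Qs.mul Qs.e (Qs.star a)) := Qs.mul_le_mul le_rfl (Qs.mul_le_mul hb.1 le_rfl)
      _ ≤ Qs.e := by rw [Qs.e_mul]; exact ha.1
  · calc Qs.mul (Qs.star (Qs.mul a b)) (Qs.mul a b)
        = Qs.mul (Qs.star b) (Qs.mul (Qs.mul (Qs.star a) a) b) := by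
          rw [Qs.star_mul, Qs.mul_assoc, Qs.mul_assoc]
      _ ≤ Qs.mul (Qs.star b) (Qs.mul Qs.e b) := Qs.mul_le_mul le_rfl (Qs.mul_le_mul ha.2 le_rfl)
      _ ≤ Qs.e := by rw [Qs.e_mul]; exact hb.2

theorem star_mul_self_mul_le (hw : w ∈ Qs.PU) (hb : b ≤ Qs.e) :
    Qs.mul (Qs.star (Qs.mul w b)) (Qs.mul w b) ≤ b :=
  calc Qs.mul (Qs.star (Qs.mul w b)) (Qs.mul w b)
      = Qs.mul (Qs.star b) (Qs.mul (Qs.mul (Qs.star w) w) b) := by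
        rw [Qs.star_mul, Qs.mul_assoc, Qs.mul_assoc]
    _ ≤ Qs.mul Qs.e (Qs.mul Qs.e b) := Qs.mul_le_mul (Qs.star_le_e hb) (Qs.mul_le_mul hw.2 le_rfl)
    _ = b := by rw [Qs.e_mul, Qs.e_mul]

end Quantale'

namespace InverseQuantalFrame

variable {Q : Type*} [Order.Frame Q] (Qf : InverseQuantalFrame Q) {w : Q}

theorem le_mul_star_mul (a : Q) : a ≤ Qf.mul (Qf.mul a (Qf.star a)) a :=
  (Qf.le_supp_mul a).trans (Qf.mul_le_mul (Qf.supp_le_mul_star a) le_rfl)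

theorem mul_star_mul_of_mem_PU (hw : w ∈ Qf.PU) : Qf.mul (Qf.mul w (Qf.star w)) w = w :=
  le_antisymm ((Qf.mul_le_mul hw.1 le_rfl).trans (Qf.e_mul w).le) (Qf.le_mul_star_mul w)

end InverseQuantalFrame

namespace PreHilbertModule

variable {Q X : Type*} [CompleteLattice Q] [CompleteLattice X] {Qs : Quantale' Q}
  (H : PreHilbertModule Qs X) {a b : Q} {x y u : X}

theorem act_mono_left (x : X) (h : a ≤ b) : H.act a x ≤ H.act b x :=
  monotone_of_map_sSup (f := (H.act · x)) (fun S => H.sSup_act S x) h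

theorem act_mono_right (a : Q) (h : x ≤ y) : H.act a x ≤ H.act a y :=
  monotone_of_map_sSup (f := H.act a) (H.act_sSup a) h

theorem act_iSup₂_left {ι : Sort*} {κ : ι → Sort*} (f : ∀ i, κ i → Q) (x : X) :
    H.act (⨆ (i) (j), f i j) x = ⨆ (i) (j), H.act (f i j) x :=
  map_iSup₂_of_map_sSup (f := (H.act · x)) (fun S => H.sSup_act S x) f

theorem inner_mono_left (z : X) (h : x ≤ y) : H.inner x z ≤ H.inner y z :=
  monotone_of_map_sSup (f := (H.inner · z)) (fun S => H.sSup_inner S z) h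

theorem star_inner (x y : X) : Qs.star (H.inner x y) = H.inner y x :=
  (H.inner_star y x).symm

theorem inner_act_right (x : X) (a : Q) (y : X) :
    H.inner x (H.act a y) = Qs.mul (H.inner x y) (Qs.star a) := by
  rw [H.inner_star, H.inner_act, Qs.star_mul, H.star_inner]

theorem inner_sSup_right (x : X) (T : Set X) : H.inner x (sSup T) = ⨆ p ∈ T, H.inner x p := by
  rw [H.inner_star, H.sSup_inner, map_iSup₂_of_map_sSup Qs.star_sSup]
  simp only [H.star_inner]

theorem act_inner_sSup_le (T : Set X) (x : X)
    (h : ∀ p ∈ T, ∀ p' ∈ T, H.act (H.inner x p) p' ≤ x) :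
    H.act (H.inner x (sSup T)) (sSup T) ≤ x := by
  rw [H.inner_sSup_right, H.act_iSup₂_left]
  refine iSup₂_le fun p hp => ?_
  rw [H.act_sSup]
  exact iSup₂_le fun p' hp' => h p hp p' hp'

theorem isHilbertSection_of_mem_basis {S : Set X} (hS : H.IsHilbertBasis S) (hu : u ∈ S) :
    H.IsHilbertSection u := fun x =>
  (le_biSup (fun t => H.act (H.inner x t) t) hu).trans_eq (hS x).symm

end PreHilbertModule

namespace PreHilbertModule

variable {Q X : Type*} [Order.Frame Q] [CompleteLattice X] {Qf : InverseQuantalFrame Q}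
  (H : PreHilbertModule Qf.toQuantale' X) {s t : X}

theorem le_inner_act_self (hs : H.IsHilbertSection s) {b : Q}
    (hb : b ≤ H.inner s t) : b ≤ H.inner (H.act b t) t := by
  have hbb : Qf.mul (Qf.star b) b ≤ H.inner t t :=
    calc Qf.mul (Qf.star b) b ≤ Qf.mul (H.inner t s) (H.inner s t) := by
          rw [← H.star_inner s t]; exact Qf.mul_le_mul (Qf.star_mono hb) hb
      _ = H.inner (H.act (H.inner t s) s) t := (H.inner_act _ _ _).symm
      _ ≤ H.inner t t := H.inner_mono_left t (hs t)
  calc b ≤ Qf.mul (Qf.mul b (Qf.star b)) b := Qf.le_mul_star_mul b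
    _ = Qf.mul b (Qf.mul (Qf.star b) b) := Qf.mul_assoc _ _ _
    _ ≤ Qf.mul b (H.inner t t) := Qf.mul_le_mul le_rfl hbb
    _ = H.inner (H.act b t) t := (H.inner_act _ _ _).symm

theorem inner_inf_eq_of_isHilbertSection (hs : H.IsHilbertSection s)
    (ht : H.IsHilbertSection t) (s' : X) :
    H.inner (s ⊓ s') t = H.inner s t ⊓ H.inner s' t := by
  refine le_antisymm
    (le_inf (H.inner_mono_left t inf_le_left) (H.inner_mono_left t inf_le_right)) ?_
  have hbt : H.act (H.inner s t ⊓ H.inner s' t) t ≤ s ⊓ s' :=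
    le_inf ((H.act_mono_left t inf_le_left).trans (ht s))
      ((H.act_mono_left t inf_le_right).trans (ht s'))
  exact (H.le_inner_act_self hs inf_le_left).trans (H.inner_mono_left t hbt)

end PreHilbertModule

namespace QSheaf

variable {Q X : Type*} [Order.Frame Q] [Order.Frame X] {Qf : InverseQuantalFrame Q}
  (H : QSheaf Qf X) {p p' t u : X}

theorem act_sppX_self (x : X) : H.act (H.sppX x) x = x := by
  obtain ⟨S, hS⟩ := H.hasBasis
  refine le_antisymm ((H.act_mono_left x inf_le_right).trans (H.act_e x).le) ?_
  conv_lhs => rw [hS x]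
  refine iSup₂_le fun u hu => ?_
  have hux : H.act (H.inner x u) u ≤ x := H.isHilbertSection_of_mem_basis hS hu x
  have hsupp : Qf.supp (H.inner x u) ≤ H.sppX x :=
    le_inf (calc Qf.supp (H.inner x u) ≤ Qf.mul (H.inner x u) (H.inner u x) := by
                  rw [← H.star_inner x u]; exact Qf.supp_le_mul_star _
                _ = H.inner (H.act (H.inner x u) u) x := (H.inner_act _ _ _).symm
                _ ≤ H.inner x x := H.inner_mono_left x hux)
      (Qf.supp_le_e _)
  calc H.act (H.inner x u) u ≤ H.act (Qf.mul (Qf.supp (H.inner x u)) (H.inner x u)) u :=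
        H.act_mono_left u (Qf.le_supp_mul _)
    _ = H.act (Qf.supp (H.inner x u)) (H.act (H.inner x u) u) := H.act_mul _ _ _
    _ ≤ H.act (H.sppX x) x := (H.act_mono_left _ hsupp).trans (H.act_mono_right _ hux)

theorem act_sppX_le_of_le_localSection (ht : H.IsLocalSection t) (hp : p ≤ t) (hp' : p' ≤ t) :
    H.act (H.sppX p) p' ≤ p :=
  calc H.act (H.sppX p) p' = H.act (H.sppX p) ⊤ ⊓ p' := H.anchor _ _ inf_le_right
    _ ≤ H.act (H.sppX p) ⊤ ⊓ t := inf_le_inf_left _ hp'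
    _ = H.act (H.sppX p) t := (H.anchor _ _ inf_le_right).symm
    _ = p := ht p hp

theorem exists_eq_sSup_partialUnit_act (t : X) :
    ∃ T : Set X, t = sSup T ∧ ∀ p ∈ T, ∃ u w, H.IsHilbertSection u ∧ w ∈ Qf.PU ∧
      Qf.mul (Qf.star w) w ≤ H.inner u u ∧ p = H.act w u := by
  obtain ⟨S, hS⟩ := H.hasBasis
  refine ⟨{p | p ≤ t ∧ ∃ u w, H.IsHilbertSection u ∧ w ∈ Qf.PU ∧
      Qf.mul (Qf.star w) w ≤ H.inner u u ∧ p = H.act w u},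
    le_antisymm ?_ (sSup_le fun p hp => hp.1), fun p hp => hp.2⟩
  conv_lhs => rw [hS t]
  refine iSup₂_le fun u hu => ?_
  have hu' : H.IsHilbertSection u := H.isHilbertSection_of_mem_basis hS hu
  have hdecomp : H.inner t u = ⨆ v ∈ Qf.PU, H.inner t u ⊓ v := by
    rw [← inf_sSup_eq, show sSup Qf.PU = ⊤ from Qf.sSup_PU, inf_top_eq]
  rw [hdecomp, H.act_iSup₂_left]
  refine iSup₂_le fun v hv => le_sSup ⟨(H.act_mono_left u inf_le_left).trans (hu' t), u,
    Qf.mul (H.inner t u ⊓ v) (H.sppX u), hu', ?_, ?_, ?_⟩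
  · exact Qf.mul_mem_PU (Qf.mem_PU_of_le hv inf_le_right) (Qf.mem_PU_of_le_e inf_le_right)
  · exact (Qf.star_mul_self_mul_le (Qf.mem_PU_of_le hv inf_le_right) inf_le_right).trans
      inf_le_left
  · rw [H.act_mul, H.act_sppX_self]

theorem act_inner_partialUnit_act_le (ht : H.IsLocalSection t) (hu : H.IsHilbertSection u)
    {w : Q} (hw : w ∈ Qf.PU) (hwu : Qf.mul (Qf.star w) w ≤ H.inner u u)
    (hp : H.act w u ≤ t) (hp' : p' ≤ t) (x : X) :
    H.act (H.inner x (H.act w u)) p' ≤ x := by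
  have hww : Qf.mul w (Qf.star w) ≤ H.sppX (H.act w u) := by
    refine le_inf ?_ hw.1
    calc Qf.mul w (Qf.star w) = Qf.mul (Qf.mul w (Qf.mul (Qf.star w) w)) (Qf.star w) := by
          rw [← Qf.mul_assoc, Qf.mul_star_mul_of_mem_PU hw]
      _ ≤ Qf.mul (Qf.mul w (H.inner u u)) (Qf.star w) :=
          Qf.mul_le_mul (Qf.mul_le_mul le_rfl hwu) le_rfl
      _ = H.inner (H.act w u) (H.act w u) := by
          rw [H.inner_act, H.inner_act_right, Qf.mul_assoc]
  have hstar : Qf.mul (Qf.mul (Qf.star w) w) (Qf.star w) = Qf.star w := by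
    simpa only [Qf.star_star] using Qf.mul_star_mul_of_mem_PU (Qf.star_mem_PU hw)
  have hp'u : H.act (Qf.star w) p' ≤ u :=
    calc H.act (Qf.star w) p' = H.act (Qf.star w) (H.act (Qf.mul w (Qf.star w)) p') := by
          rw [← H.act_mul, ← Qf.mul_assoc, hstar]
      _ ≤ H.act (Qf.star w) (H.act w u) := H.act_mono_right _ <|
          (H.act_mono_left p' hww).trans (H.act_sppX_le_of_le_localSection ht hp hp')
      _ = H.act (Qf.mul (Qf.star w) w) u := (H.act_mul _ _ _).symm
      _ ≤ u := (H.act_mono_left u hw.2).trans (H.act_e u).le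
  calc H.act (H.inner x (H.act w u)) p' = H.act (H.inner x u) (H.act (Qf.star w) p') := by
        rw [H.inner_act_right, H.act_mul]
    _ ≤ H.act (H.inner x u) u := H.act_mono_right _ hp'u
    _ ≤ x := hu x

theorem IsLocalSection.isHilbertSection {H : QSheaf Qf X} (ht : H.IsLocalSection t) :
    H.IsHilbertSection t := by
  obtain ⟨T, rfl, hT⟩ := H.exists_eq_sSup_partialUnit_act t
  intro x
  refine H.act_inner_sSup_le T x fun p hp p' hp' => ?_
  obtain ⟨u, w, hu, hw, hwu, rfl⟩ := hT p hp
  exact H.act_inner_partialUnit_act_le ht hu hw hwu (le_sSup hp) (le_sSup hp') x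

end QSheaf

theorem stmt18_general {Q X : Type*} [Order.Frame Q] [Order.Frame X]
    (Qf : InverseQuantalFrame Q) (H : QSheaf Qf X)
    (s s' t : X)
    (hs : H.IsBisection s) (ht : H.IsBisection t) :
    H.inner (s ⊓ s') t = H.inner s t ⊓ H.inner s' t :=
  H.inner_inf_eq_of_isHilbertSection hs.1.isHilbertSection ht.1.isHilbertSection s'

/-- In a principal `Q`-sheaf, for local bisections `s, s', t`
with equal right supports, `⟨s ∧ s', t⟩ = ⟨s,t⟩ ∧ ⟨s',t⟩`. -/
theorem stmt18 {Q X : Type*} [Order.Frame Q] [Order.Frame X]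
    (Qf : InverseQuantalFrame Q) (H : QSheaf Qf X)
    -- X is a principal Q-sheaf (principally covered and a bisheaf):
    (hpc : sSup {s : X | H.IsPrincipalSection s} = ⊤)
    (hbisheaf : sSup {s : X | H.IsRightLocalSection s} = ⊤)
    (s s' t : X)
    (hs : H.IsBisection s) (hs' : H.IsBisection s') (ht : H.IsBisection t)
    (h1 : H.act ⊤ s = H.act ⊤ t) (h2 : H.act ⊤ s' = H.act ⊤ t) :
    H.inner (s ⊓ s') t = H.inner s t ⊓ H.inner s' t :=
  stmt18_general Qf H s s' t hs ht
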